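/- Let H be a real Hilbert space, m ≥ 1, and let R_1, …, R_m be orthogonal projections on H. Then for every f ∈ H, ‖R_m f − f‖² ≤ 4 m (‖f‖² − ‖R_m R_{m−1} ⋯ R_1 f‖²). -/

import Mathlib

/-!
Write `g₀ = f` and `gₖ₊₁ = Rₖ₊₁ gₖ`. Each step is orthogonal, so the squared step lengths
telescope to `‖f‖² - ‖gₘ‖²`. Since `Rₘ` is a contraction and `gₘ = Rₘ gₘ₋₁`,
`‖Rₘ f - f‖ ≤ ‖Rₘ (f - gₘ₋₁)‖ + ‖gₘ - gₘ₋₁‖ + ‖gₘ₋₁ - f‖` is at most twice the length of the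
path `g₀, …, gₘ`, and Cauchy–Schwarz bounds the square of that length by
`m (‖f‖² - ‖gₘ‖²)`.
-/

open scoped RealInnerProductSpace

def IsOrthProj {H : Type*} [NormedAddCommGroup H] [InnerProductSpace ℝ H]
    (P : H →L[ℝ] H) : Prop :=
  (∀ x y : H, ⟪P x, y⟫ = ⟪x, P y⟫) ∧ ∀ x : H, P (P x) = P x

open Finset

section

variable {H : Type*} [NormedAddCommGroup H] [InnerProductSpace ℝ H]

theorem isOrthProj_one : IsOrthProj (1 : H →L[ℝ] H) :=
  ⟨fun _ _ => rfl, fun _ => rfl⟩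

namespace IsOrthProj

variable {P : H →L[ℝ] H}

theorem inner_apply_sub_eq_zero (hP : IsOrthProj P) (x : H) : ⟪P x, x - P x⟫ = 0 := by
  rw [inner_sub_right, ← hP.1, hP.2, real_inner_comm, sub_self]

theorem norm_sq_add_norm_sub_sq (hP : IsOrthProj P) (x : H) :
    ‖P x‖ ^ 2 + ‖x - P x‖ ^ 2 = ‖x‖ ^ 2 := by
  simpa [hP.inner_apply_sub_eq_zero x] using (norm_add_sq_real (P x) (x - P x)).symm

theorem norm_apply_le (hP : IsOrthProj P) (x : H) : ‖P x‖ ≤ ‖x‖ :=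
  sq_le_sq₀ (norm_nonneg _) (norm_nonneg _) |>.mp <| by
    nlinarith [hP.norm_sq_add_norm_sub_sq x, sq_nonneg ‖x - P x‖]

end IsOrthProj

def trajectory (R : ℕ → H →L[ℝ] H) (f : H) : ℕ → H
  | 0 => f
  | n + 1 => R n (trajectory R f n)

variable (R : ℕ → H →L[ℝ] H) (f : H)

theorem list_prod_reverse_ofFn_apply (n : ℕ) :
    (List.ofFn fun i : Fin n => R i).reverse.prod f = trajectory R f n := by
  induction n with
  | zero => rfl
  | succ n ih =>
    rw [List.ofFn_succ', List.concat_eq_append, List.reverse_append, List.reverse_singleton,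
      List.singleton_append, List.prod_cons, mul_apply_eq_comp]
    simpa only [Fin.val_castSucc, Fin.val_last, trajectory] using congrArg (R n) ih

variable {R}

theorem sum_range_dist_trajectory_sq (hR : ∀ k, IsOrthProj (R k)) (n : ℕ) :
    ∑ k ∈ range n, dist (trajectory R f k) (trajectory R f (k + 1)) ^ 2 =
      ‖f‖ ^ 2 - ‖trajectory R f n‖ ^ 2 := by
  have hstep : ∀ k, dist (trajectory R f k) (trajectory R f (k + 1)) ^ 2 =
      ‖trajectory R f k‖ ^ 2 - ‖trajectory R f (k + 1)‖ ^ 2 := fun k => by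
    rw [dist_eq_norm, ← (hR k).norm_sq_add_norm_sub_sq (trajectory R f k)]
    simp [trajectory]
  rw [sum_congr rfl fun k _ => hstep k, sum_range_sub']
  rfl

theorem dist_apply_self_le_two_mul_sum (hR : ∀ k, IsOrthProj (R k)) (n : ℕ) :
    dist (R n f) f ≤
      2 * ∑ k ∈ range (n + 1), dist (trajectory R f k) (trajectory R f (k + 1)) := by
  set g := trajectory R f
  have hpath : dist f (g n) ≤ ∑ k ∈ range n, dist (g k) (g (k + 1)) :=
    dist_le_range_sum_dist g n
  have hcontract : dist (R n f) (g (n + 1)) ≤ dist f (g n) := by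
    rw [dist_eq_norm, dist_eq_norm]
    exact map_sub (R n) f (g n) ▸ (hR n).norm_apply_le (f - g n)
  calc dist (R n f) f ≤ dist (R n f) (g (n + 1)) + dist (g (n + 1)) (g n) + dist (g n) f :=
        dist_triangle4 ..
    _ ≤ 2 * dist f (g n) + dist (g n) (g (n + 1)) := by
        rw [dist_comm (g n) f, dist_comm (g (n + 1))]; linarith
    _ ≤ _ := by rw [sum_range_succ]; linarith [dist_nonneg (x := g n) (y := g (n + 1))]

theorem dist_apply_self_sq_le (hR : ∀ k, IsOrthProj (R k)) (n : ℕ) :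
    dist (R n f) f ^ 2 ≤ 4 * (n + 1) * (‖f‖ ^ 2 - ‖trajectory R f (n + 1)‖ ^ 2) := by
  have hCS := sq_sum_le_card_mul_sum_sq (s := range (n + 1))
    (f := fun k => dist (trajectory R f k) (trajectory R f (k + 1)))
  rw [sum_range_dist_trajectory_sq f hR, card_range] at hCS
  push_cast at hCS
  calc dist (R n f) f ^ 2
      ≤ (2 * ∑ k ∈ range (n + 1), dist (trajectory R f k) (trajectory R f (k + 1))) ^ 2 :=
        pow_le_pow_left₀ dist_nonneg (dist_apply_self_le_two_mul_sum f hR n) 2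
    _ ≤ _ := by nlinarith

end

/-- For orthogonal projections `R_1, …, R_m` (`m ≥ 1`), one has
`‖R_m f - f‖² ≤ 4 m (‖f‖² - ‖R_m ⋯ R_1 f‖²)` for every `f`. -/
theorem last_projection_movement_bound
    {H : Type*} [NormedAddCommGroup H] [InnerProductSpace ℝ H]
    (m : ℕ) (hm : 1 ≤ m) (R : Fin m → H →L[ℝ] H)
    (hR : ∀ j, IsOrthProj (R j)) (f : H) :
    ‖R ⟨m - 1, by omega⟩ f - f‖ ^ 2 ≤
      4 * m * (‖f‖ ^ 2 - ‖((List.ofFn R).reverse).prod f‖ ^ 2) := by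
  obtain ⟨n, rfl⟩ := Nat.exists_eq_add_of_le' hm
  set R' : ℕ → H →L[ℝ] H := fun k => if h : k < n + 1 then R ⟨k, h⟩ else 1
  have hR' : ∀ k, IsOrthProj (R' k) := fun k => by
    unfold R'
    split_ifs
    exacts [hR _, isOrthProj_one]
  have hlast : R ⟨n + 1 - 1, by omega⟩ = R' n := by simp [R']
  have hlist : List.ofFn R = List.ofFn fun i : Fin (n + 1) => R' i := by simp [R']
  rw [hlast, hlist, list_prod_reverse_ofFn_apply, ← dist_eq_norm]
  exact_mod_cast dist_apply_self_sq_le f hR' n
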